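/- arXiv:1806.04457 — 2 statements merged into one kernel-verified Lean document; each statement's English description precedes it below -/
import Mathlib

section
/- Let G and H be vertex-disjoint digraphs and let J be any directed union of G and H, i.e., J arises from the disjoint union of G and H by adding an arbitrary subset of arcs directed from vertices of G to vertices of H. Then the directed path-width of J equals the maximum of the directed path-widths of G and H. -/
noncomputable section
attribute [local instance] Classical.propDecidable

/-- A digraph: a loopless binary relation on a vertex type. -/
structure Digraph' (V : Type) where
  Adj : V → V → Prop
  loopless : ∀ v, ¬ Adj v v

namespace Digraph'

/-- The subdigraph of `G` induced by a vertex set `S`. -/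
def induce {V : Type} (G : Digraph' V) (S : Set V) : Digraph' S where
  Adj a b := G.Adj a.1 b.1
  loopless a := G.loopless a.1

end Digraph'

/-- `bags : Fin r → Set V` is a directed path-decomposition of `G`:
(dpw-1) the bags cover `V`; (dpw-2) for every arc `(u,v)` there are `i ≤ j` with
`u ∈ X_i`, `v ∈ X_j`; (dpw-3) every vertex occurs in a consecutive interval of bags. -/
def IsDPD {V : Type} (G : Digraph' V) (r : ℕ) (bags : Fin r → Set V) : Prop :=
  (∀ v, ∃ i, v ∈ bags i) ∧
  (∀ u v, G.Adj u v → ∃ i j : Fin r, i ≤ j ∧ u ∈ bags i ∧ v ∈ bags j) ∧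
  (∀ (v : V) (i j k : Fin r), i ≤ j → j ≤ k → v ∈ bags i → v ∈ bags k → v ∈ bags j)

/-- The width of a sequence of bags: maximum bag size minus one. -/
def bagsWidth {V : Type} {r : ℕ} (bags : Fin r → Set V) : ℕ :=
  (Finset.univ.sup fun i => (bags i).ncard) - 1

/-- The directed path-width of a digraph. -/
def dpw {V : Type} [Fintype V] (G : Digraph' V) : ℕ :=
  sInf { w | ∃ (r : ℕ) (bags : Fin r → Set V), IsDPD G r bags ∧ bagsWidth bags = w }

/-- Disjoint union `G ⊕ H` of two vertex-disjoint digraphs. -/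
def dDisjUnion {V W : Type} (G : Digraph' V) (H : Digraph' W) : Digraph' (V ⊕ W) where
  Adj x y :=
    match x, y with
    | Sum.inl a, Sum.inl b => G.Adj a b
    | Sum.inr a, Sum.inr b => H.Adj a b
    | _, _ => False
  loopless v := by
    cases v with
    | inl a => exact G.loopless a
    | inr a => exact H.loopless a

/-- Order composition `G ⊘ H`: disjoint union plus all arcs from `G` to `H`. -/
def dOrder {V W : Type} (G : Digraph' V) (H : Digraph' W) : Digraph' (V ⊕ W) where
  Adj x y :=
    match x, y with
    | Sum.inl a, Sum.inl b => G.Adj a b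
    | Sum.inr a, Sum.inr b => H.Adj a b
    | Sum.inl _, Sum.inr _ => True
    | Sum.inr _, Sum.inl _ => False
  loopless v := by
    cases v with
    | inl a => exact G.loopless a
    | inr a => exact H.loopless a

/-- Series composition `G ⊗ H`: disjoint union plus all arcs in both directions
between `G` and `H`. -/
def dSeries {V W : Type} (G : Digraph' V) (H : Digraph' W) : Digraph' (V ⊕ W) where
  Adj x y :=
    match x, y with
    | Sum.inl a, Sum.inl b => G.Adj a b
    | Sum.inr a, Sum.inr b => H.Adj a b
    | Sum.inl _, Sum.inr _ => True
    | Sum.inr _, Sum.inl _ => True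
  loopless v := by
    cases v with
    | inl a => exact G.loopless a
    | inr a => exact H.loopless a

/-- A directed union `G ⊖ H`: disjoint union plus an arbitrary set `F` of arcs
directed from vertices of `G` to vertices of `H`. -/
def dDirUnion {V W : Type} (G : Digraph' V) (H : Digraph' W) (F : V → W → Prop) :
    Digraph' (V ⊕ W) where
  Adj x y :=
    match x, y with
    | Sum.inl a, Sum.inl b => G.Adj a b
    | Sum.inr a, Sum.inr b => H.Adj a b
    | Sum.inl a, Sum.inr b => F a b
    | Sum.inr _, Sum.inl _ => False
  loopless v := by
    cases v with
    | inl a => exact G.loopless a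
    | inr a => exact H.loopless a

/-- The underlying undirected graph of a digraph. -/
def und {V : Type} (G : Digraph' V) : SimpleGraph V where
  Adj u v := G.Adj u v ∨ G.Adj v u
  symm := ⟨fun u v h => h.symm⟩
  loopless := ⟨fun v h => h.elim (G.loopless v) (G.loopless v)⟩

/-- `bags` is an (undirected) path-decomposition of the simple graph `G`. -/
def IsUPD {V : Type} (G : SimpleGraph V) (r : ℕ) (bags : Fin r → Set V) : Prop :=
  (∀ v, ∃ i, v ∈ bags i) ∧
  (∀ u v, G.Adj u v → ∃ i : Fin r, u ∈ bags i ∧ v ∈ bags i) ∧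
  (∀ (v : V) (i j k : Fin r), i ≤ j → j ≤ k → v ∈ bags i → v ∈ bags k → v ∈ bags j)

/-- The (undirected) path-width of a simple graph. -/
def upw {V : Type} [Fintype V] (G : SimpleGraph V) : ℕ :=
  sInf { w | ∃ (r : ℕ) (bags : Fin r → Set V), IsUPD G r bags ∧ bagsWidth bags = w }

/-- `S` is `Z`-normal in `G`: every directed walk in `G - Z` with first and last
vertex in `S` uses only vertices of `S` (equivalently of `Z ∪ S`). -/
def ZNormal {V : Type} (G : Digraph' V) (Z S : Set V) : Prop :=
  ∀ (l : List V) (hl : l ≠ []), l.Chain' G.Adj → (∀ v ∈ l, v ∉ Z) →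
    l.head hl ∈ S → l.getLast hl ∈ S → ∀ v ∈ l, v ∈ S

/-- A directed (arboreal) tree-decomposition of `G`.
The out-tree has vertex set `Fin t`, root `root`, and parent function `par`
(with `par root = root`); its arcs are the pairs `(par s, s)` for `s ≠ root`.
`W` partitions `V` into nonempty sets, `X s` is the set attached to the arc
`(par s, s)`, and for each arc the union of the `W r` over all descendants `r`
of `s` is `X s`-normal. -/
structure DTD {V : Type} (G : Digraph' V) where
  t : ℕ
  root : Fin t
  par : Fin t → Fin t
  par_root : par root = root
  reach : ∀ s : Fin t, ∃ n : ℕ, par^[n] s = root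
  W : Fin t → Set V
  X : Fin t → Set V
  W_nonempty : ∀ s, (W s).Nonempty
  W_disjoint : ∀ s s', s ≠ s' → Disjoint (W s) (W s')
  W_cover : ∀ v : V, ∃ s, v ∈ W s
  normal : ∀ s : Fin t, s ≠ root →
    ZNormal G (X s) (⋃ r ∈ {r : Fin t | ∃ n : ℕ, par^[n] r = s}, W r)

namespace DTD

variable {V : Type} {G : Digraph' V}

/-- The set `W_s ∪ ⋃_{e ∼ s} X_e` at a tree vertex `s`. -/
def bagAt (D : DTD G) (s : Fin D.t) : Set V :=
  D.W s ∪ ⋃ s' ∈ {s' : Fin D.t | s' ≠ D.root ∧ (s' = s ∨ D.par s' = s)}, D.X s'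

/-- The width of a directed tree-decomposition. -/
def width (D : DTD G) : ℕ :=
  (Finset.univ.sup fun s => (D.bagAt s).ncard) - 1

end DTD

/-- The directed tree-width of a digraph. -/
def dtw {V : Type} [Fintype V] (G : Digraph' V) : ℕ :=
  sInf { w | ∃ D : DTD G, D.width = w }

/-- Reachability in a digraph. -/
def Reach {V : Type} (G : Digraph' V) : V → V → Prop :=
  Relation.ReflTransGen G.Adj

/-- The strongly connected component of a vertex `v`. -/
def sccOf {V : Type} (G : Digraph' V) (v : V) : Set V :=
  {u | Reach G v u ∧ Reach G u v}

/-- `S` is a strongly connected component of `G`. -/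
def IsSCC {V : Type} (G : Digraph' V) (S : Set V) : Prop :=
  ∃ v, S = sccOf G v

/-- Directed co-graphs: built from single-vertex digraphs by disjoint union,
series composition and order composition. -/
inductive DiCograph : {V : Type} → Digraph' V → Prop
  | single {V : Type} (G : Digraph' V) (h1 : Nonempty V) (h2 : Subsingleton V) :
      DiCograph G
  | disjUnion {V W : Type} {G : Digraph' V} {H : Digraph' W} :
      DiCograph G → DiCograph H → DiCograph (dDisjUnion G H)
  | series {V W : Type} {G : Digraph' V} {H : Digraph' W} :
      DiCograph G → DiCograph H → DiCograph (dSeries G H)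
  | order {V W : Type} {G : Digraph' V} {H : Digraph' W} :
      DiCograph G → DiCograph H → DiCograph (dOrder G H)

/-!
Restricting a directed path-decomposition of `G ⊖ H` to the vertices of `G`, resp. `H`, gives
decompositions of `G` and `H` of no larger width. Conversely, listing all bags of a
decomposition of `G` before all bags of one of `H` decomposes `G ⊖ H`: every arc between the
two parts goes from `G` to `H`, hence from an earlier bag to a later one.
-/

lemma dpw_le_bagsWidth {V : Type} [Fintype V] {G : Digraph' V} {r : ℕ} {bags : Fin r → Set V}
    (h : IsDPD G r bags) : dpw G ≤ bagsWidth bags :=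
  Nat.sInf_le ⟨r, bags, h, rfl⟩

lemma exists_isDPD_bagsWidth_eq_dpw {V : Type} [Fintype V] (G : Digraph' V) :
    ∃ (r : ℕ) (bags : Fin r → Set V), IsDPD G r bags ∧ bagsWidth bags = dpw G :=
  Nat.sInf_mem
    (s := {w | ∃ (r : ℕ) (bags : Fin r → Set V), IsDPD G r bags ∧ bagsWidth bags = w})
    ⟨_, 1, fun _ => Set.univ, ⟨fun _ => ⟨0, trivial⟩,
      fun _ _ _ => ⟨0, 0, le_rfl, trivial, trivial⟩, fun _ _ _ _ _ _ _ _ => trivial⟩, rfl⟩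

section Restriction

variable {V V' : Type} {G : Digraph' V} {G' : Digraph' V'} {f : V → V'}

lemma IsDPD.preimage (hf : ∀ u v, G.Adj u v → G'.Adj (f u) (f v)) {r : ℕ}
    {bags : Fin r → Set V'} (h : IsDPD G' r bags) : IsDPD G r fun i => f ⁻¹' bags i :=
  ⟨fun v => h.1 (f v), fun u v huv => h.2.1 (f u) (f v) (hf u v huv),
    fun v => h.2.2 (f v)⟩

lemma bagsWidth_preimage_le [Finite V'] (hf : f.Injective) {r : ℕ} (bags : Fin r → Set V') :
    bagsWidth (fun i => f ⁻¹' bags i) ≤ bagsWidth bags := by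
  refine Nat.sub_le_sub_right (Finset.sup_mono_fun fun i _ => ?_) 1
  rw [← Set.ncard_image_of_injective _ hf]
  exact Set.ncard_le_ncard (Set.image_preimage_subset f _)

theorem dpw_le_dpw_of_injective [Fintype V] [Fintype V'] (hf : f.Injective)
    (hadj : ∀ u v, G.Adj u v → G'.Adj (f u) (f v)) : dpw G ≤ dpw G' := by
  obtain ⟨r, bags, h, hw⟩ := exists_isDPD_bagsWidth_eq_dpw G'
  calc dpw G ≤ bagsWidth (fun i => f ⁻¹' bags i) := dpw_le_bagsWidth (h.preimage hadj)
    _ ≤ dpw G' := hw ▸ bagsWidth_preimage_le hf bags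

end Restriction

theorem Fin.univ_sup_append {α : Type*} [SemilatticeSup α] [OrderBot α] {m n : ℕ}
    (f : Fin m → α) (g : Fin n → α) :
    Finset.univ.sup (Fin.append f g) = Finset.univ.sup f ⊔ Finset.univ.sup g := by
  refine le_antisymm (Finset.sup_le fun x _ => ?_) (sup_le ?_ ?_)
  · induction x using Fin.addCases with
    | left i => simpa using le_sup_of_le_left (Finset.le_sup (f := f) (Finset.mem_univ i))
    | right j => simpa using le_sup_of_le_right (Finset.le_sup (f := g) (Finset.mem_univ j))
  · exact Finset.sup_le fun i _ => by
      simpa using Finset.le_sup (f := Fin.append f g) (Finset.mem_univ (Fin.castAdd n i))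
  · exact Finset.sup_le fun j _ => by
      simpa using Finset.le_sup (f := Fin.append f g) (Finset.mem_univ (Fin.natAdd m j))

section Concatenation

variable {V W : Type} {r s : ℕ}

def appendBags (bG : Fin r → Set V) (bH : Fin s → Set W) : Fin (r + s) → Set (V ⊕ W) :=
  Fin.append (fun i => Sum.inl '' bG i) (fun j => Sum.inr '' bH j)

variable {bG : Fin r → Set V} {bH : Fin s → Set W}

@[simp]
lemma appendBags_castAdd (i : Fin r) : appendBags bG bH (Fin.castAdd s i) = Sum.inl '' bG i :=
  Fin.append_left _ _ i

@[simp]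
lemma appendBags_natAdd (j : Fin s) : appendBags bG bH (Fin.natAdd r j) = Sum.inr '' bH j :=
  Fin.append_right _ _ j

lemma inl_mem_appendBags {a : V} {x : Fin (r + s)} :
    Sum.inl a ∈ appendBags bG bH x ↔ ∃ i, Fin.castAdd s i = x ∧ a ∈ bG i := by
  induction x using Fin.addCases with
  | left i => simp
  | right j => simp [Fin.ext_iff]; omega

lemma inr_mem_appendBags {b : W} {x : Fin (r + s)} :
    Sum.inr b ∈ appendBags bG bH x ↔ ∃ j, Fin.natAdd r j = x ∧ b ∈ bH j := by
  induction x using Fin.addCases with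
  | left i => simp [Fin.ext_iff]; omega
  | right j => simp

lemma isDPD_appendBags {G : Digraph' V} {H : Digraph' W} (hG : IsDPD G r bG)
    (hH : IsDPD H s bH) (F : V → W → Prop) :
    IsDPD (dDirUnion G H F) (r + s) (appendBags bG bH) := by
  refine ⟨?_, ?_, ?_⟩
  · rintro (a | b)
    · obtain ⟨i, hi⟩ := hG.1 a
      exact ⟨_, inl_mem_appendBags.2 ⟨i, rfl, hi⟩⟩
    · obtain ⟨j, hj⟩ := hH.1 b
      exact ⟨_, inr_mem_appendBags.2 ⟨j, rfl, hj⟩⟩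
  · rintro (a | b) (a' | b') hadj
    · obtain ⟨i, j, hij, hi, hj⟩ := hG.2.1 a a' hadj
      exact ⟨_, _, hij, inl_mem_appendBags.2 ⟨i, rfl, hi⟩,
        inl_mem_appendBags.2 ⟨j, rfl, hj⟩⟩
    · obtain ⟨i, hi⟩ := hG.1 a
      obtain ⟨j, hj⟩ := hH.1 b'
      exact ⟨Fin.castAdd s i, Fin.natAdd r j, i.isLt.le.trans (Nat.le_add_right r j),
        inl_mem_appendBags.2 ⟨i, rfl, hi⟩, inr_mem_appendBags.2 ⟨j, rfl, hj⟩⟩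
    · exact hadj.elim
    · obtain ⟨i, j, hij, hi, hj⟩ := hH.2.1 b b' hadj
      exact ⟨_, _, (Fin.natAdd_le_natAdd_iff r).2 hij, inr_mem_appendBags.2 ⟨i, rfl, hi⟩,
        inr_mem_appendBags.2 ⟨j, rfl, hj⟩⟩
  · rintro (a | b) x y z hxy hyz hx hz
    · obtain ⟨i, rfl, hi⟩ := inl_mem_appendBags.1 hx
      obtain ⟨k, rfl, hk⟩ := inl_mem_appendBags.1 hz
      have hyr : (y : ℕ) < r := lt_of_le_of_lt hyz k.isLt
      exact inl_mem_appendBags.2 ⟨⟨y, hyr⟩, rfl, hG.2.2 a i ⟨y, hyr⟩ k hxy hyz hi hk⟩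
    · obtain ⟨i, rfl, hi⟩ := inr_mem_appendBags.1 hx
      obtain ⟨k, rfl, hk⟩ := inr_mem_appendBags.1 hz
      have hry : r ≤ (y : ℕ) := (Nat.le_add_right r i).trans hxy
      obtain ⟨j, rfl⟩ : ∃ j, Fin.natAdd r j = y :=
        ⟨⟨y - r, by omega⟩, Fin.ext (by simp only [Fin.val_natAdd]; omega)⟩
      exact inr_mem_appendBags.2 ⟨j, rfl, hH.2.2 b i j k ((Fin.natAdd_le_natAdd_iff r).1 hxy)
        ((Fin.natAdd_le_natAdd_iff r).1 hyz) hi hk⟩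

lemma bagsWidth_appendBags :
    bagsWidth (appendBags bG bH) = max (bagsWidth bG) (bagsWidth bH) := by
  have hcard : (fun x => (appendBags bG bH x).ncard) =
      Fin.append (fun i => (bG i).ncard) (fun j => (bH j).ncard) := by
    ext x
    induction x using Fin.addCases <;>
      simp [Set.ncard_image_of_injective _ Sum.inl_injective,
        Set.ncard_image_of_injective _ Sum.inr_injective]
  simp only [bagsWidth, hcard, Fin.univ_sup_append]
  omega

end Concatenation

theorem stmt5 {V W : Type} [Fintype V] [Fintype W] (G : Digraph' V) (H : Digraph' W)
    (F : V → W → Prop) :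
    dpw (dDirUnion G H F) = max (dpw G) (dpw H) := by
  refine le_antisymm ?_ (max_le ?_ ?_)
  · obtain ⟨r, bG, hG, hwG⟩ := exists_isDPD_bagsWidth_eq_dpw G
    obtain ⟨s, bH, hH, hwH⟩ := exists_isDPD_bagsWidth_eq_dpw H
    calc dpw (dDirUnion G H F) ≤ bagsWidth (appendBags bG bH) :=
          dpw_le_bagsWidth (isDPD_appendBags hG hH F)
      _ = max (dpw G) (dpw H) := by rw [bagsWidth_appendBags, hwG, hwH]
  · exact dpw_le_dpw_of_injective Sum.inl_injective fun _ _ h => h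
  · exact dpw_le_dpw_of_injective Sum.inr_injective fun _ _ h => h
end
end

section
/- For every digraph G, the directed tree-width of G is at most the directed path-width of G. -/
noncomputable section
attribute [local instance] Classical.propDecidable

/-!
Number the vertices by the first bag `f v` that contains them and, after discarding the
bags that are first for no vertex, take as tree a path whose `s`-th node receives the
vertices first seen in the `s`-th surviving bag `B_s`; the arc into node `s` carries
`B_{s-1} ∩ B_s`. Below node `s` lie exactly the vertices with `f v ≥ f_s`. An arc `a → b`
leaving this set has `b ∈ B_j` for some `j ≥ f a ≥ f_s`, while `f b ≤ f_{s-1}`, so by the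
interval property `b ∈ B_{s-1} ∩ B_s`. Hence every node's set lies inside its own bag `B_s`.
-/

open Finset

lemma ZNormal.of_forall_adj {V : Type} {G : Digraph' V} {Z S : Set V}
    (hexit : ∀ a b, G.Adj a b → a ∈ S → b ∉ S → b ∈ Z) : ZNormal G Z S := by
  rintro l hl hchain hZ hhead -
  induction l with
  | nil => exact absurd rfl hl
  | cons x xs ih =>
    intro v hv
    rcases xs with _ | ⟨y, ys⟩
    · rwa [List.mem_singleton.mp hv]
    · have hxy : G.Adj x y := (List.isChain_cons_cons.mp hchain).1
      have hy : y ∈ S := by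
        by_contra hy
        exact hZ y (by simp) (hexit x y hxy hhead hy)
      rcases List.mem_cons.mp hv with rfl | hv
      · exact hhead
      · exact ih (List.cons_ne_nil y ys) hchain.tail
          (fun w hw => hZ w (List.mem_cons_of_mem x hw)) hy v hv

section PathTree

variable {t : ℕ}

def pathParent (s : Fin t) : Fin t := ⟨s - 1, by omega⟩

lemma pathParent_iterate_val (n : ℕ) (s : Fin t) : (pathParent^[n] s : ℕ) = s - n := by
  induction n generalizing s with
  | zero => rfl
  | succ n ih =>
    rw [Function.iterate_succ_apply, ih]
    simp only [pathParent]
    omega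

lemma exists_pathParent_iterate_eq_iff {s q : Fin t} :
    (∃ n, pathParent^[n] q = s) ↔ s ≤ q := by
  simp only [Fin.ext_iff, pathParent_iterate_val, Fin.le_def]
  constructor
  · rintro ⟨n, hn⟩
    omega
  · intro h
    exact ⟨q - s, by omega⟩

end PathTree

lemma isDPD_univ {V : Type} (G : Digraph' V) : IsDPD G 1 fun _ => Set.univ :=
  ⟨fun _ => ⟨0, trivial⟩, fun _ _ _ => ⟨0, 0, le_rfl, trivial, trivial⟩,
    fun _ _ _ _ _ _ _ _ => trivial⟩

namespace IsDPD

variable {V : Type} {G : Digraph' V} {r : ℕ} {bags : Fin r → Set V}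

def firstBag (h : IsDPD G r bags) (v : V) : Fin r :=
  (univ.filter fun i => v ∈ bags i).min' <| by
    obtain ⟨i, hi⟩ := h.1 v
    exact ⟨i, by simpa using hi⟩

lemma mem_firstBag (h : IsDPD G r bags) (v : V) : v ∈ bags (h.firstBag v) := by
  simpa [firstBag] using (univ.filter fun i => v ∈ bags i).min'_mem _

lemma firstBag_le (h : IsDPD G r bags) {v : V} {i : Fin r} (hv : v ∈ bags i) :
    h.firstBag v ≤ i :=
  min'_le _ _ (by simpa using hv)

lemma mem_of_firstBag_le (h : IsDPD G r bags) {v : V} {i j : Fin r}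
    (hi : h.firstBag v ≤ i) (hij : i ≤ j) (hv : v ∈ bags j) : v ∈ bags i :=
  h.2.2 v _ i j hi hij (h.mem_firstBag v) hv

lemma zNormal_setOf_le_firstBag (h : IsDPD G r bags) {k' k : Fin r} (hk : k' ≤ k)
    (hgap : ∀ v, h.firstBag v < k → h.firstBag v ≤ k') :
    ZNormal G (bags k' ∩ bags k) {v | k ≤ h.firstBag v} := by
  refine ZNormal.of_forall_adj fun a b hab ha hb => ?_
  obtain ⟨i, j, hij, hai, hbj⟩ := h.2.1 a b hab
  have hkj : k ≤ j := (show k ≤ h.firstBag a from ha).trans ((h.firstBag_le hai).trans hij)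
  have hbk : h.firstBag b < k := lt_of_not_ge hb
  exact ⟨h.mem_of_firstBag_le (hgap b hbk) (hk.trans hkj) hbj,
    h.mem_of_firstBag_le hbk.le hkj hbj⟩

section Construction

variable [Fintype V] (h : IsDPD G r bags)

def firstBags : Finset (Fin r) := univ.image h.firstBag

lemma card_firstBags_pos [Nonempty V] : 0 < h.firstBags.card :=
  card_pos.mpr (univ_nonempty.image _)

def firstBagEmb : Fin h.firstBags.card ↪o Fin r := h.firstBags.orderEmbOfFin rfl

lemma exists_firstBagEmb_eq (v : V) : ∃ s, h.firstBagEmb s = h.firstBag v := by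
  have : h.firstBag v ∈ Set.range h.firstBagEmb := by
    rw [firstBagEmb, range_orderEmbOfFin]
    exact mem_image_of_mem _ (mem_univ v)
  exact this

lemma exists_firstBag_eq (s : Fin h.firstBags.card) : ∃ v, h.firstBag v = h.firstBagEmb s := by
  obtain ⟨v, -, hv⟩ := mem_image.mp (h.firstBags.orderEmbOfFin_mem rfl s)
  exact ⟨v, hv⟩

lemma firstBag_le_firstBagEmb_pathParent {s : Fin h.firstBags.card} {v : V}
    (hv : h.firstBag v < h.firstBagEmb s) : h.firstBag v ≤ h.firstBagEmb (pathParent s) := by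
  obtain ⟨q, hq⟩ := h.exists_firstBagEmb_eq v
  rw [← hq] at hv ⊢
  have hqs : q < s := h.firstBagEmb.lt_iff_lt.mp hv
  refine h.firstBagEmb.monotone ?_
  simp only [Fin.le_def, Fin.lt_def, pathParent] at hqs ⊢
  omega

lemma biUnion_descendants_eq (s : Fin h.firstBags.card) :
    (⋃ q ∈ {q | ∃ n, pathParent^[n] q = s}, {v | h.firstBag v = h.firstBagEmb q}) =
      {v | h.firstBagEmb s ≤ h.firstBag v} := by
  ext v
  simp only [Set.mem_iUnion, Set.mem_ofPred_eq, exists_prop, exists_pathParent_iterate_eq_iff]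
  constructor
  · rintro ⟨q, hsq, hv⟩
    exact hv ▸ h.firstBagEmb.monotone hsq
  · intro hle
    obtain ⟨q, hq⟩ := h.exists_firstBagEmb_eq v
    rw [← hq] at hle
    exact ⟨q, h.firstBagEmb.le_iff_le.mp hle, hq.symm⟩

def toDTD [Nonempty V] : DTD G where
  t := h.firstBags.card
  root := ⟨0, h.card_firstBags_pos⟩
  par := pathParent
  par_root := rfl
  reach s := ⟨s, Fin.ext (by simp [pathParent_iterate_val])⟩
  W s := {v | h.firstBag v = h.firstBagEmb s}
  X s := bags (h.firstBagEmb (pathParent s)) ∩ bags (h.firstBagEmb s)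
  W_nonempty s := h.exists_firstBag_eq s
  W_disjoint s s' hss := Set.disjoint_left.mpr fun v hv hv' =>
    hss (h.firstBagEmb.injective (hv.symm.trans hv'))
  W_cover v := (h.exists_firstBagEmb_eq v).imp fun _ hs => hs.symm
  normal s _ := by
    rw [h.biUnion_descendants_eq s]
    refine h.zNormal_setOf_le_firstBag (h.firstBagEmb.monotone ?_)
      fun v => h.firstBag_le_firstBagEmb_pathParent
    simp only [Fin.le_def, pathParent]
    omega

lemma bagAt_toDTD_subset [Nonempty V] (s : Fin h.toDTD.t) :
    h.toDTD.bagAt s ⊆ bags (h.firstBagEmb s) := by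
  rintro v (hv | hv)
  · exact (show h.firstBag v = h.firstBagEmb s from hv) ▸ h.mem_firstBag v
  · simp only [Set.mem_iUnion, exists_prop] at hv
    obtain ⟨s', ⟨-, rfl | hs'⟩, hvX⟩ := hv
    · exact hvX.2
    · exact (show pathParent s' = s from hs') ▸ hvX.1

lemma width_toDTD_le [Nonempty V] : h.toDTD.width ≤ bagsWidth bags := by
  refine Nat.sub_le_sub_right (Finset.sup_le fun s _ => ?_) 1
  calc (h.toDTD.bagAt s).ncard ≤ (bags (h.firstBagEmb s)).ncard :=
        Set.ncard_le_ncard (h.bagAt_toDTD_subset s) (Set.toFinite _)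
    _ ≤ univ.sup fun i => (bags i).ncard :=
        le_sup (f := fun i => (bags i).ncard) (mem_univ _)

end Construction

lemma dtw_le_bagsWidth [Fintype V] (h : IsDPD G r bags) : dtw G ≤ bagsWidth bags := by
  cases isEmpty_or_nonempty V
  · have hno : {w | ∃ D : DTD G, D.width = w} = ∅ :=
      Set.eq_empty_of_forall_notMem <| by
        rintro _ ⟨D, -⟩
        exact isEmptyElim (D.W_nonempty D.root).some
    simp [dtw, hno]
  · calc dtw G ≤ h.toDTD.width := Nat.sInf_le ⟨h.toDTD, rfl⟩
      _ ≤ bagsWidth bags := h.width_toDTD_le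

end IsDPD

theorem stmt10 {V : Type} [Fintype V] (G : Digraph' V) :
    dtw G ≤ dpw G := by
  obtain ⟨r, bags, h, hw⟩ :
      dpw G ∈ {w | ∃ (r : ℕ) (bags : Fin r → Set V), IsDPD G r bags ∧ bagsWidth bags = w} :=
    Nat.sInf_mem ⟨bagsWidth fun _ : Fin 1 => Set.univ, 1, _, isDPD_univ G, rfl⟩
  exact hw ▸ h.dtw_le_bagsWidth
end
end
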